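/- (Casimirs of the Lie–Poisson bracket on (𝔰𝔢(3) ⋉ ℝ⁴)*.) For differentiable functions F, G : ℝ³ × ℝ³ × ℝ³ × ℝ → ℝ, writing ∇₁F, ∇₂F, ∇₃F ∈ ℝ³ for the gradients of F in the three ℝ³-arguments and ∂₄F ∈ ℝ for the partial derivative in the last argument, define {F, G}(μ, p, Γ, h) = −μ·(∇₁F × ∇₁G) − p·(∇₁F × ∇₂G − ∇₁G × ∇₂F) − Γ·(∇₁F × ∇₃G + (∂₄G)∇₂F − ∇₁G × ∇₃F − (∂₄F)∇₂G), all derivatives evaluated at (μ, p, Γ, h). Then the functions C¹(μ,p,Γ,h) = ‖Γ‖² and C²(μ,p,Γ,h) = ‖p × Γ‖² are Casimirs: for every differentiable F and i ∈ {1,2}, {F, Cⁱ}(μ,p,Γ,h) = 0 for all (μ,p,Γ,h) ∈ ℝ³ × ℝ³ × ℝ³ × ℝ. -/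

import Mathlib

open Matrix

/-- The phase space `(𝔰𝔢(3) ⋉ ℝ⁴)* ≅ ℝ³ × ℝ³ × ℝ³ × ℝ` with coordinates `(μ, p, Γ, h)`. -/
abbrev Phase4 : Type := (Fin 3 → ℝ) × (Fin 3 → ℝ) × (Fin 3 → ℝ) × ℝ

/-- Gradient in the first `ℝ³`-argument (with respect to the dot product). -/
noncomputable def grad1 (F : Phase4 → ℝ) (x : Phase4) : Fin 3 → ℝ :=
  fun i => fderiv ℝ F x (Pi.single i 1, 0, 0, 0)

/-- Gradient in the second `ℝ³`-argument. -/
noncomputable def grad2 (F : Phase4 → ℝ) (x : Phase4) : Fin 3 → ℝ :=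
  fun i => fderiv ℝ F x (0, Pi.single i 1, 0, 0)

/-- Gradient in the third `ℝ³`-argument. -/
noncomputable def grad3 (F : Phase4 → ℝ) (x : Phase4) : Fin 3 → ℝ :=
  fun i => fderiv ℝ F x (0, 0, Pi.single i 1, 0)

/-- Partial derivative in the last (`ℝ`-valued) argument. -/
noncomputable def pder4 (F : Phase4 → ℝ) (x : Phase4) : ℝ :=
  fderiv ℝ F x (0, 0, 0, 1)

/-- The (minus) Lie–Poisson bracket on `(𝔰𝔢(3) ⋉ ℝ⁴)* ≅ ℝ³ × ℝ³ × ℝ³ × ℝ`: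
`{F,G}(μ,p,Γ,h) = −μ·(∇₁F × ∇₁G) − p·(∇₁F × ∇₂G − ∇₁G × ∇₂F)
  − Γ·(∇₁F × ∇₃G + (∂₄G)∇₂F − ∇₁G × ∇₃F − (∂₄F)∇₂G)`. -/
noncomputable def lpBracket4 (F G : Phase4 → ℝ) (x : Phase4) : ℝ :=
  -(x.1 ⬝ᵥ (grad1 F x ⨯₃ grad1 G x))
    - x.2.1 ⬝ᵥ (grad1 F x ⨯₃ grad2 G x - grad1 G x ⨯₃ grad2 F x)
    - x.2.2.1 ⬝ᵥ (grad1 F x ⨯₃ grad3 G x + pder4 G x • grad2 F x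
        - grad1 G x ⨯₃ grad3 F x - pder4 F x • grad2 G x)

/-! Both functions depend only on `(p, Γ)`, and for such a `G` the bracket collapses to
`{F, G} = ∇₁F · (p × ∇₂G + Γ × ∇₃G) + ∂₄F (Γ · ∇₂G)`. For `‖Γ‖²` one has `∇₂G = 0`, `∇₃G = 2Γ`.
For `‖p × Γ‖²`, with `n = p × Γ`, one has `∇₂G = 2 Γ × n` and `∇₃G = 2 n × p`, so
`p × ∇₂G + Γ × ∇₃G = -2 n × (p × Γ) = -2 n × n = 0` by the Jacobi identity. -/

section BilinearDerivatives

variable {E : Type*} [NormedAddCommGroup E] [NormedSpace ℝ E] {x : E}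

theorem fderiv_dotProduct_self_apply {ι : Type*} [Fintype ι] {f : E → ι → ℝ}
    (hf : DifferentiableAt ℝ f x) (v : E) :
    fderiv ℝ (fun y => f y ⬝ᵥ f y) x v = 2 * (f x ⬝ᵥ fderiv ℝ f x v) := by
  have h := congrArg (· v) ((dotProductBilin ℝ ℝ).toContinuousBilinearMap.fderiv_of_bilinear hf hf)
  simp only [LinearMap.toContinuousBilinearMap_apply, dotProductBilin_apply_apply,
    ContinuousLinearMap.precompR_apply, ContinuousLinearMap.compL_apply, _root_.add_apply,
    ContinuousLinearMap.comp_apply, ContinuousLinearMap.precompL_apply] at h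
  rw [h, dotProduct_comm (fderiv ℝ f x v)]
  ring

theorem DifferentiableAt.cross {f g : E → Fin 3 → ℝ} (hf : DifferentiableAt ℝ f x)
    (hg : DifferentiableAt ℝ g x) : DifferentiableAt ℝ (fun y => f y ⨯₃ g y) x :=
  ((crossProduct (R := ℝ)).toContinuousBilinearMap.hasFDerivAt_of_bilinear
    hf.hasFDerivAt hg.hasFDerivAt).differentiableAt

theorem fderiv_cross_apply {f g : E → Fin 3 → ℝ} (hf : DifferentiableAt ℝ f x)
    (hg : DifferentiableAt ℝ g x) (v : E) :
    fderiv ℝ (fun y => f y ⨯₃ g y) x v = fderiv ℝ f x v ⨯₃ g x + f x ⨯₃ fderiv ℝ g x v := by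
  have h := congrArg (· v)
    ((crossProduct (R := ℝ)).toContinuousBilinearMap.fderiv_of_bilinear hf hg)
  simp only [LinearMap.toContinuousBilinearMap_apply, ContinuousLinearMap.precompR_apply,
    ContinuousLinearMap.compL_apply, _root_.add_apply, ContinuousLinearMap.comp_apply,
    ContinuousLinearMap.precompL_apply] at h
  rw [h, add_comm]

end BilinearDerivatives

theorem grad_eq_of_fderiv_eq {G : Phase4 → ℝ} {x : Phase4} {a b c : Fin 3 → ℝ} {d : ℝ}
    (hG : ∀ v : Phase4, fderiv ℝ G x v = a ⬝ᵥ v.1 + b ⬝ᵥ v.2.1 + c ⬝ᵥ v.2.2.1 + d * v.2.2.2) :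
    grad1 G x = a ∧ grad2 G x = b ∧ grad3 G x = c ∧ pder4 G x = d := by
  refine ⟨funext fun i => ?_, funext fun i => ?_, funext fun i => ?_, ?_⟩ <;>
    simp [grad1, grad2, grad3, pder4, hG]

theorem lpBracket4_eq_zero_of_fderiv_eq {F G : Phase4 → ℝ} {x : Phase4} {b c : Fin 3 → ℝ}
    (hG : ∀ v : Phase4, fderiv ℝ G x v = b ⬝ᵥ v.2.1 + c ⬝ᵥ v.2.2.1)
    (hbc : x.2.1 ⨯₃ b + x.2.2.1 ⨯₃ c = 0) (hb : x.2.2.1 ⬝ᵥ b = 0) : lpBracket4 F G x = 0 := by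
  obtain ⟨h1, h2, h3, h4⟩ := grad_eq_of_fderiv_eq (a := 0) (d := 0) (by simpa using hG)
  set a := grad1 F x
  calc lpBracket4 F G x = a ⬝ᵥ (x.2.1 ⨯₃ b + x.2.2.1 ⨯₃ c) + pder4 F x * (x.2.2.1 ⬝ᵥ b) := by
        rw [dotProduct_add, triple_product_permutation a, triple_product_permutation a,
          ← cross_anticomm a b, ← cross_anticomm a c, dotProduct_neg, dotProduct_neg]
        simp only [lpBracket4, h1, h2, h3, h4, map_zero, LinearMap.zero_apply, dotProduct_zero,
          neg_zero, sub_zero, zero_sub, zero_smul, add_zero, dotProduct_sub, dotProduct_smul,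
          smul_eq_mul, a]
        ring
    _ = 0 := by rw [hbc, hb, dotProduct_zero, mul_zero, add_zero]

theorem lpBracket4_normSq_Gamma_eq_zero (F : Phase4 → ℝ) (x : Phase4) :
    lpBracket4 F (fun y => y.2.2.1 ⬝ᵥ y.2.2.1) x = 0 := by
  have hΓ : DifferentiableAt ℝ (fun y : Phase4 => y.2.2.1) x := by fun_prop
  refine lpBracket4_eq_zero_of_fderiv_eq (b := 0) (c := (2 : ℝ) • x.2.2.1) (fun v => ?_) ?_ ?_
  · rw [fderiv_dotProduct_self_apply hΓ, hasFDerivAt_snd.snd.fst.fderiv]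
    simp
  · simp
  · simp

theorem lpBracket4_normSq_p_cross_Gamma_eq_zero (F : Phase4 → ℝ) (x : Phase4) :
    lpBracket4 F (fun y => (y.2.1 ⨯₃ y.2.2.1) ⬝ᵥ (y.2.1 ⨯₃ y.2.2.1)) x = 0 := by
  have hp : DifferentiableAt ℝ (fun y : Phase4 => y.2.1) x := by fun_prop
  have hΓ : DifferentiableAt ℝ (fun y : Phase4 => y.2.2.1) x := by fun_prop
  set n := x.2.1 ⨯₃ x.2.2.1
  refine lpBracket4_eq_zero_of_fderiv_eq (b := (2 : ℝ) • x.2.2.1 ⨯₃ n)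
    (c := (2 : ℝ) • n ⨯₃ x.2.1) (fun v => ?_) ?_ ?_
  · rw [fderiv_dotProduct_self_apply (hp.cross hΓ), fderiv_cross_apply hp hΓ,
      hasFDerivAt_snd.fst.fderiv, hasFDerivAt_snd.snd.fst.fderiv]
    simp only [ContinuousLinearMap.coe_comp, ContinuousLinearMap.coe_fst',
      ContinuousLinearMap.coe_snd', Function.comp_apply, smul_dotProduct, smul_eq_mul,
      dotProduct_add]
    rw [triple_product_permutation n v.2.1, triple_product_permutation n x.2.1,
      triple_product_permutation x.2.1, dotProduct_comm v.2.2.1, dotProduct_comm v.2.1]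
    ring
  · have hjacobi := jacobi_cross x.2.1 x.2.2.1 n
    rw [cross_self, add_zero] at hjacobi
    rw [map_smul, map_smul, ← smul_add, hjacobi, smul_zero]
  · rw [dotProduct_smul, dot_self_cross, smul_zero]

theorem casimirs_se3_R4_general (F : Phase4 → ℝ) (x : Phase4) :
    lpBracket4 F (fun y => y.2.2.1 ⬝ᵥ y.2.2.1) x = 0 ∧
    lpBracket4 F (fun y => (y.2.1 ⨯₃ y.2.2.1) ⬝ᵥ (y.2.1 ⨯₃ y.2.2.1)) x = 0 :=
  ⟨lpBracket4_normSq_Gamma_eq_zero F x, lpBracket4_normSq_p_cross_Gamma_eq_zero F x⟩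

/-- `C¹ = ‖Γ‖²` and `C² = ‖p × Γ‖²` are Casimirs of the Lie–Poisson bracket on
`(𝔰𝔢(3) ⋉ ℝ⁴)*`. -/
theorem casimirs_se3_R4 (F : Phase4 → ℝ) (hF : Differentiable ℝ F) (x : Phase4) :
    lpBracket4 F (fun y => y.2.2.1 ⬝ᵥ y.2.2.1) x = 0 ∧
    lpBracket4 F (fun y => (y.2.1 ⨯₃ y.2.2.1) ⬝ᵥ (y.2.1 ⨯₃ y.2.2.1)) x = 0 :=
  casimirs_se3_R4_general F x
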